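/- Let X^{(1)},...,X^{(k)} be independent identically distributed r-truncated degenerate Poisson random variables with parameter α > 0 and 0 < λ < 1, and let X = Σ_{i=1}^k X^{(i)}. Then P(X = n) = (k!/(e_λ(α)-e_{λ,r}(α))^k) (α^n/n!) S_{2,λ}^{[r]}(n, kr+k) for n ≥ k(r+1), and P(X = n) = 0 otherwise. -/

import Mathlib

/-- Degenerate falling factorial `(1)_{k,λ}`. -/
noncomputable def degFall (l : ℝ) (k : ℕ) : ℝ := ∏ j ∈ Finset.range k, (1 - (j : ℝ) * l)

/-- `e_λ(α) = Σ_{k=0}^∞ (1)_{k,λ} α^k / k!`. -/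
noncomputable def degExp (l a : ℝ) : ℝ := ∑' k : ℕ, degFall l k * a ^ k / (Nat.factorial k : ℝ)

/-- `e_{λ,r}(α) = Σ_{k=0}^r (1)_{k,λ} α^k / k!`. -/
noncomputable def degExpTrunc (l : ℝ) (r : ℕ) (a : ℝ) : ℝ :=
  ∑ k ∈ Finset.range (r + 1), degFall l k * a ^ k / (Nat.factorial k : ℝ)

/-- The pmf of the `r`-truncated degenerate Poisson random variable `X_{λ,r}`. -/
noncomputable def truncDegPoissonPmf (l : ℝ) (r : ℕ) (a : ℝ) (k : ℕ) : ℝ :=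
  if r + 1 ≤ k then
    degFall l k * a ^ k / ((Nat.factorial k : ℝ) * (degExp l a - degExpTrunc l r a))
  else 0

/-- The `n`-th moment `E[X_{λ,r}^n]`. -/
noncomputable def truncDegPoissonMoment (l : ℝ) (r : ℕ) (a : ℝ) (n : ℕ) : ℝ :=
  ∑' k : ℕ, (k : ℝ) ^ n * truncDegPoissonPmf l r a k

/-- `e_λ(t)` as a formal power series over ℝ. -/
noncomputable def degExpPS (l : ℝ) : PowerSeries ℝ :=
  PowerSeries.mk fun m => degFall l m / (Nat.factorial m : ℝ)

/-- `e_{λ,r}(t)` as a formal power series. -/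
noncomputable def degExpTruncPS (l : ℝ) (r : ℕ) : PowerSeries ℝ :=
  PowerSeries.mk fun m => if m ≤ r then degFall l m / (Nat.factorial m : ℝ) else 0

/-- `r`-truncated degenerate Stirling numbers of the second kind `S_{2,λ}^{[r]}(n,k(r+1))`,
defined by `(1/k!)(e_λ(t)-e_{λ,r}(t))^k = Σ_{n≥k(r+1)} S_{2,λ}^{[r]}(n,k(r+1)) t^n/n!`. -/
noncomputable def truncDegStirling2 (l : ℝ) (r n k : ℕ) : ℝ :=
  (Nat.factorial n : ℝ) *
    PowerSeries.coeff n
      (((Nat.factorial k : ℝ)⁻¹) • (degExpPS l - degExpTruncPS l r) ^ k)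

/-!
Writing `E(t) = e_λ(t) - e_{λ,r}(t)` and `D = e_λ(α) - e_{λ,r}(α)`, the pmf is
`p(m) = [tᵐ] E · αᵐ / D`, so by independence `P(X = n) = Σ_{m₁+⋯+m_k=n} ∏ᵢ p(mᵢ)` is the
coefficient extraction `[tⁿ] Eᵏ · αⁿ / Dᵏ`, which vanishes for `n < k(r+1)` because `t^{r+1} ∣ E`.

For `0 < λ < 1` the numbers `(1)_{m,λ}` change sign, so `p ≥ 0` (needed to move
`ENNReal.ofReal` through the products and sums) is not automatic: it comes from `p` being a
distribution. Since `p(m+1)/p(m) = (1 - mλ)α/(m+1) ∈ [-λα, 0]` for large `m`, the negative part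
of `p` is dominated by the shifted positive part, so `Σ ofReal (p m) = 1` makes `p` summable;
then `Σ p = 1` as well, and `Σ max(p, 0) = Σ p` forces `p ≥ 0`.
-/

open MeasureTheory ProbabilityTheory Finset Filter

theorem summable_posPart_of_tsum_ofReal_ne_top {ι : Type*} {f : ι → ℝ}
    (h : ∑' i, ENNReal.ofReal (f i) ≠ ⊤) : Summable fun i => max (f i) 0 := by
  simpa only [ENNReal.toReal_ofReal'] using ENNReal.summable_toReal h

theorem summable_of_summable_posPart_of_negPart_succ_le {f : ℕ → ℝ} {C : ℝ}
    (hneg : ∀ᶠ m in atTop, max (-f (m + 1)) 0 ≤ C * max (f m) 0)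
    (hpos : Summable fun m => max (f m) 0) : Summable f := by
  obtain ⟨N, hN⟩ := eventually_atTop.mp hneg
  have hneg_summable : Summable fun m => max (-f m) 0 := by
    rw [← summable_nat_add_iff (N + 1)]
    refine Summable.of_nonneg_of_le (fun _ => le_max_right _ _) (fun m => ?_)
      (((summable_nat_add_iff N).mpr hpos).mul_left C)
    simpa only [add_assoc] using hN (m + N) (Nat.le_add_left N m)
  simpa only [max_zero_sub_eq_self] using hpos.sub hneg_summable

theorem nonneg_of_tsum_ofReal_eq_ofReal_tsum {ι : Type*} {f : ι → ℝ} (hf : Summable f)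
    (hf₀ : 0 ≤ ∑' i, f i) (h : ∑' i, ENNReal.ofReal (f i) = ENNReal.ofReal (∑' i, f i))
    (i : ι) : 0 ≤ f i := by
  have hpos : Summable fun i => max (f i) 0 :=
    summable_posPart_of_tsum_ofReal_ne_top (h ▸ ENNReal.ofReal_ne_top)
  have htsum : ∑' i, max (f i) 0 = ∑' i, f i := by
    rw [← ENNReal.ofReal_eq_ofReal_iff (tsum_nonneg fun _ => le_max_right _ _) hf₀,
      ENNReal.ofReal_tsum_of_nonneg (fun _ => le_max_right _ _) hpos, ← h]
    simp
  have hgap : HasSum (fun i => max (f i) 0 - f i) 0 := by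
    simpa only [htsum, sub_self] using hpos.hasSum.sub hf.hasSum
  have := congrFun ((hasSum_zero_iff_of_nonneg fun i => sub_nonneg.mpr (le_max_left _ _)).mp
    hgap) i
  simp only [Pi.zero_apply, sub_eq_zero] at this
  exact this ▸ le_max_right _ _

theorem tsum_measure_preimage_singleton_eq_one {Ω : Type*} [MeasurableSpace Ω] (μ : Measure Ω)
    [IsProbabilityMeasure μ] {Y : Ω → ℕ} (hY : Measurable Y) :
    ∑' m, μ {ω | Y ω = m} = 1 := by
  have := tsum_measure_preimage_singleton (μ := μ) Set.countable_univ
    fun m _ => hY (measurableSet_singleton m)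
  rwa [Set.preimage_univ, measure_univ, tsum_univ (fun m => μ (Y ⁻¹' {m}))] at this

theorem iIndepFun.measure_sum_eq_sum_prod {ι Ω : Type*} [Fintype ι] [DecidableEq ι]
    [MeasurableSpace Ω] {μ : Measure Ω} {X : ι → Ω → ℕ} (hX : ∀ i, Measurable (X i))
    (hind : iIndepFun X μ) (n : ℕ) :
    μ {ω | ∑ i, X i ω = n} =
      ∑ f ∈ finsuppAntidiag univ n, ∏ i, μ {ω | X i ω = f i} := by
  let F : Ω → ι →₀ ℕ := fun ω => Finsupp.equivFunOnFinite.symm fun i => X i ω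
  have hfiber (f : ι →₀ ℕ) : F ⁻¹' {f} = ⋂ i, X i ⁻¹' {f i} := by
    ext ω
    simp [F, Finsupp.ext_iff]
  have hevent : {ω | ∑ i, X i ω = n} = F ⁻¹' ↑(finsuppAntidiag univ n : Finset (ι →₀ ℕ)) := by
    ext ω
    simp [F, mem_finsuppAntidiag]
  rw [hevent, ← sum_measure_preimage_singleton]
  · refine sum_congr rfl fun f _ => ?_
    rw [hfiber, hind.meas_iInter fun i => ⟨{f i}, measurableSet_singleton _, rfl⟩]
    rfl
  · exact fun f _ => hfiber f ▸ MeasurableSet.iInter fun i => hX i (measurableSet_singleton _)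

theorem degFall_succ (l : ℝ) (m : ℕ) : degFall l (m + 1) = degFall l m * (1 - m * l) :=
  prod_range_succ _ m

theorem coeff_degExpPS_sub_degExpTruncPS (l : ℝ) (r m : ℕ) :
    PowerSeries.coeff m (degExpPS l - degExpTruncPS l r) =
      if r + 1 ≤ m then degFall l m / m.factorial else 0 := by
  simp only [map_sub, degExpPS, degExpTruncPS, PowerSeries.coeff_mk]
  split_ifs <;> first | (exfalso; omega) | ring

theorem coeff_degExpPS_sub_degExpTruncPS_pow_of_lt (l : ℝ) {r n k : ℕ} (h : n < k * (r + 1)) :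
    PowerSeries.coeff n ((degExpPS l - degExpTruncPS l r) ^ k) = 0 := by
  have hdvd : PowerSeries.X ^ (r + 1) ∣ degExpPS l - degExpTruncPS l r :=
    PowerSeries.X_pow_dvd_iff.mpr fun m hm => by
      rw [coeff_degExpPS_sub_degExpTruncPS, if_neg (by omega)]
  have := pow_dvd_pow_of_dvd hdvd k
  rw [← pow_mul] at this
  exact PowerSeries.X_pow_dvd_iff.mp this n (by linarith)

section truncDegPoissonPmf

variable {l a : ℝ} {r : ℕ}

theorem truncDegPoissonPmf_eq_coeff (m : ℕ) :
    truncDegPoissonPmf l r a m =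
      PowerSeries.coeff m (degExpPS l - degExpTruncPS l r) * a ^ m /
        (degExp l a - degExpTrunc l r a) := by
  rw [coeff_degExpPS_sub_degExpTruncPS, truncDegPoissonPmf]
  split_ifs
  · rw [div_mul_eq_mul_div, div_div]
  · simp

theorem truncDegPoissonPmf_succ {m : ℕ} (hm : r + 1 ≤ m) :
    truncDegPoissonPmf l r a (m + 1) =
      truncDegPoissonPmf l r a m * ((1 - m * l) * a / (m + 1)) := by
  simp only [truncDegPoissonPmf, if_pos hm, if_pos (Nat.le_succ_of_le hm), degFall_succ,
    Nat.factorial_succ, pow_succ, div_eq_mul_inv, mul_inv, Nat.cast_mul, Nat.cast_succ]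
  ring

theorem negPart_truncDegPoissonPmf_succ_le (hl : 0 < l) (ha : 0 ≤ a) :
    ∀ᶠ m in atTop, max (-truncDegPoissonPmf l r a (m + 1)) 0 ≤
      l * a * max (truncDegPoissonPmf l r a m) 0 := by
  filter_upwards [eventually_ge_atTop (r + 1), eventually_ge_atTop ⌈1 / l⌉₊] with m hr hl'
  have hml : 1 ≤ (m : ℝ) * l := by
    have := (Nat.le_ceil (1 / l)).trans (Nat.cast_le.mpr hl')
    rwa [div_le_iff₀ hl] at this
  have hratio : 0 ≤ -((1 - m * l) * a / (m + 1)) := by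
    rw [← neg_div]; apply div_nonneg <;> nlinarith
  have hratio_le : -((1 - m * l) * a / (m + 1)) ≤ l * a := by
    rw [← neg_div, div_le_iff₀ (by positivity)]; nlinarith
  calc max (-truncDegPoissonPmf l r a (m + 1)) 0
      = max (truncDegPoissonPmf l r a m) 0 * -((1 - m * l) * a / (m + 1)) := by
        rw [truncDegPoissonPmf_succ hr, ← mul_neg, max_mul_of_nonneg _ _ hratio, zero_mul]
    _ ≤ max (truncDegPoissonPmf l r a m) 0 * (l * a) :=
        mul_le_mul_of_nonneg_left hratio_le (le_max_right _ _)
    _ = l * a * max (truncDegPoissonPmf l r a m) 0 := mul_comm _ _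

theorem tsum_truncDegPoissonPmf (hD : degExp l a - degExpTrunc l r a ≠ 0)
    (hs : Summable (truncDegPoissonPmf l r a)) : ∑' m, truncDegPoissonPmf l r a m = 1 := by
  have hterm (m : ℕ) : degFall l m * a ^ m / m.factorial =
      (degExp l a - degExpTrunc l r a) * truncDegPoissonPmf l r a m +
        (if m ∈ range (r + 1) then degFall l m * a ^ m / m.factorial else 0) := by
    rw [truncDegPoissonPmf]
    by_cases h : r + 1 ≤ m
    · rw [if_pos h, if_neg (by simp; omega), add_zero]
      field_simp
    · rw [if_neg h, if_pos (by simp; omega)]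
      ring
  have htrunc := hasSum_sum_of_ne_finset_zero (L := .unconditional ℕ) (s := range (r + 1))
    (f := fun m => if m ∈ range (r + 1) then degFall l m * a ^ m / m.factorial else 0)
    fun m hm => if_neg hm
  simp only [sum_ite_mem, inter_self] at htrunc
  have hsum : HasSum (fun m => degFall l m * a ^ m / m.factorial)
      ((degExp l a - degExpTrunc l r a) * ∑' m, truncDegPoissonPmf l r a m +
        degExpTrunc l r a) := by
    rw [funext hterm]
    exact (hs.hasSum.mul_left _).add htrunc
  have : degExp l a = (degExp l a - degExpTrunc l r a) * ∑' m, truncDegPoissonPmf l r a m +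
      degExpTrunc l r a := hsum.tsum_eq
  exact mul_left_cancel₀ hD (by linarith)

theorem truncDegPoissonPmf_nonneg (hl : 0 < l) (ha : 0 ≤ a)
    (hD : 0 < degExp l a - degExpTrunc l r a)
    {Ω : Type*} [MeasurableSpace Ω] (μ : Measure Ω) [IsProbabilityMeasure μ]
    {Y : Ω → ℕ} (hY : Measurable Y)
    (hYd : ∀ m : ℕ, μ {ω | Y ω = m} = ENNReal.ofReal (truncDegPoissonPmf l r a m)) (m : ℕ) :
    0 ≤ truncDegPoissonPmf l r a m := by
  have htotal : ∑' m, ENNReal.ofReal (truncDegPoissonPmf l r a m) = 1 := by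
    simpa only [hYd] using tsum_measure_preimage_singleton_eq_one μ hY
  have hs : Summable (truncDegPoissonPmf l r a) :=
    summable_of_summable_posPart_of_negPart_succ_le (negPart_truncDegPoissonPmf_succ_le hl ha)
      (summable_posPart_of_tsum_ofReal_ne_top (htotal ▸ ENNReal.one_ne_top))
  have hsum := tsum_truncDegPoissonPmf hD.ne' hs
  exact nonneg_of_tsum_ofReal_eq_ofReal_tsum hs (hsum ▸ zero_le_one)
    (by rw [htotal, hsum, ENNReal.ofReal_one]) m

theorem sum_prod_truncDegPoissonPmf {ι : Type*} [Fintype ι] [DecidableEq ι] (n : ℕ) :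
    ∑ f ∈ finsuppAntidiag univ n, ∏ i : ι, truncDegPoissonPmf l r a (f i) =
      PowerSeries.coeff n ((degExpPS l - degExpTruncPS l r) ^ Fintype.card ι) * a ^ n /
        (degExp l a - degExpTrunc l r a) ^ Fintype.card ι := by
  rw [← card_univ, ← prod_const, PowerSeries.coeff_prod, sum_mul, sum_div]
  refine sum_congr rfl fun f hf => ?_
  simp only [truncDegPoissonPmf_eq_coeff, prod_div_distrib, prod_mul_distrib,
    prod_pow_eq_pow_sum, (mem_finsuppAntidiag.mp hf).1, prod_const]

end truncDegPoissonPmf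

theorem truncDegPoisson_iid_sum_general (a l : ℝ) (r k : ℕ) (ha : 0 < a) (hl : 0 < l)
    (hk : 1 ≤ k) (hD : 0 < degExp l a - degExpTrunc l r a)
    {Ω : Type*} [MeasureSpace Ω] (μ : Measure Ω) [IsProbabilityMeasure μ]
    (X : Fin k → Ω → ℕ) (hXm : ∀ i, Measurable (X i))
    (hIndep : iIndepFun X μ)
    (hXd : ∀ i, ∀ m : ℕ, μ {ω | X i ω = m} = ENNReal.ofReal (truncDegPoissonPmf l r a m)) :
    ∀ n : ℕ,
      μ {ω | (∑ i, X i ω) = n} =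
        if k * (r + 1) ≤ n then
          ENNReal.ofReal ((Nat.factorial k : ℝ) / (degExp l a - degExpTrunc l r a) ^ k *
            (a ^ n / (Nat.factorial n : ℝ)) * truncDegStirling2 l r n k)
        else 0 := by
  intro n
  have hpmf := truncDegPoissonPmf_nonneg hl ha.le hD μ (hXm ⟨0, hk⟩) (hXd ⟨0, hk⟩)
  have hprod (f : Fin k →₀ ℕ) : ∏ i, μ {ω | X i ω = f i} =
      ENNReal.ofReal (∏ i, truncDegPoissonPmf l r a (f i)) := by
    rw [ENNReal.ofReal_prod_of_nonneg fun i _ => hpmf _]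
    exact prod_congr rfl fun i _ => hXd i (f i)
  rw [iIndepFun.measure_sum_eq_sum_prod hXm hIndep, sum_congr rfl fun f _ => hprod f,
    ← ENNReal.ofReal_sum_of_nonneg fun f _ => prod_nonneg fun i _ => hpmf _,
    sum_prod_truncDegPoissonPmf, Fintype.card_fin]
  split_ifs with hn
  · congr 1
    rw [truncDegStirling2, map_smul, smul_eq_mul]
    field_simp
  · rw [coeff_degExpPS_sub_degExpTruncPS_pow_of_lt l (not_le.mp hn), zero_mul, zero_div,
      ENNReal.ofReal_zero]

/-- If `X⁽¹⁾, …, X⁽ᵏ⁾` are i.i.d. `r`-truncated degenerate Poisson random variables with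
parameter `α` and `X = Σᵢ X⁽ⁱ⁾`, then
`P(X = n) = (k!/(e_λ(α)-e_{λ,r}(α))^k)(αⁿ/n!) S_{2,λ}^{[r]}(n, k(r+1))` for `n ≥ k(r+1)`,
and `P(X = n) = 0` otherwise. -/
theorem truncDegPoisson_iid_sum (a l : ℝ) (r k : ℕ) (ha : 0 < a) (hl : 0 < l) (hl1 : l < 1)
    (hk : 1 ≤ k) (hD : 0 < degExp l a - degExpTrunc l r a)
    {Ω : Type*} [MeasureSpace Ω] (μ : Measure Ω) [IsProbabilityMeasure μ]
    (X : Fin k → Ω → ℕ) (hXm : ∀ i, Measurable (X i))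
    (hIndep : iIndepFun X μ)
    (hXd : ∀ i, ∀ m : ℕ, μ {ω | X i ω = m} = ENNReal.ofReal (truncDegPoissonPmf l r a m)) :
    ∀ n : ℕ,
      μ {ω | (∑ i, X i ω) = n} =
        if k * (r + 1) ≤ n then
          ENNReal.ofReal ((Nat.factorial k : ℝ) / (degExp l a - degExpTrunc l r a) ^ k *
            (a ^ n / (Nat.factorial n : ℝ)) * truncDegStirling2 l r n k)
        else 0 :=
  truncDegPoisson_iid_sum_general a l r k ha hl hk hD μ X hXm hIndep hXd
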